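/- For p ∈ [0,1], let ρ_W be the two-qubit Werner state ρ_W = p • |Ψ⁻⟩⟨Ψ⁻| + ((1−p)/4) • I₄, where Ψ⁻ = (e_{01} − e_{10})/√2 is the singlet state (indices are pairs (i,μ) with i,μ ∈ Fin 2, Ψ⁻(0,1) = 1/√2, Ψ⁻(1,0) = −1/√2, other entries 0). Then the partial transpose of ρ_W, defined entrywise by (T^p ρ_W)((i,μ),(j,ν)) = ρ_W((j,μ),(i,ν)), is positive semidefinite if and only if p ≤ 1/3. -/

import Mathlib

/-!
The partial transpose of the singlet projector is `½ · 1 - |Φ⁺⟩⟨Φ⁺|` with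
`Φ⁺ = (|00⟩ + |11⟩)/√2`, so the partial transpose of the Werner state is
`(1 + p)/4 · 1 - p |Φ⁺⟩⟨Φ⁺|`. Its eigenvalues are `(1 + p)/4` (on `Φ⁺ᗮ`) and `(1 - 3p)/4`
(on `Φ⁺`), and the second one is nonnegative exactly when `p ≤ 1/3`.
-/

open Matrix
open scoped ComplexOrder

/-- The two-qubit singlet state `(|01⟩ − |10⟩)/√2`. -/
noncomputable def singletVec : Fin 2 × Fin 2 → ℂ := fun x =>
  if x = (0, 1) then ((1 / Real.sqrt 2 : ℝ) : ℂ)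
  else if x = (1, 0) then -((1 / Real.sqrt 2 : ℝ) : ℂ) else 0

namespace Matrix

section PartialTranspose

variable {m n α : Type*}

def partialTranspose (M : Matrix (m × n) (m × n) α) : Matrix (m × n) (m × n) α :=
  of fun a b => M (b.1, a.2) (a.1, b.2)

@[simp]
theorem partialTranspose_apply (M : Matrix (m × n) (m × n) α) (a b : m × n) :
    partialTranspose M a b = M (b.1, a.2) (a.1, b.2) := rfl

@[simp]
theorem partialTranspose_add [Add α] (M N : Matrix (m × n) (m × n) α) :
    partialTranspose (M + N) = partialTranspose M + partialTranspose N := rfl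

@[simp]
theorem partialTranspose_smul {R : Type*} [SMul R α] (r : R) (M : Matrix (m × n) (m × n) α) :
    partialTranspose (r • M) = r • partialTranspose M := rfl

@[simp]
theorem partialTranspose_one [DecidableEq m] [DecidableEq n] [Zero α] [One α] :
    partialTranspose (1 : Matrix (m × n) (m × n) α) = 1 := by
  ext a b
  simp only [partialTranspose_apply, one_apply, Prod.ext_iff]
  grind

end PartialTranspose

section RankOnePerturbation

variable {𝕜 n : Type*} [RCLike 𝕜] [Fintype n] [DecidableEq n]

theorem posSemidef_one_sub_vecMulVec {u : n → 𝕜} (hu : star u ⬝ᵥ u = 1) :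
    (1 - vecMulVec u (star u)).PosSemidef := by
  -- a Hermitian idempotent `Q` is positive semidefinite as `Q = Qᴴ * Q`
  have hQ : (1 - vecMulVec u (star u))ᴴ = 1 - vecMulVec u (star u) := by
    simp [conjTranspose_vecMulVec]
  have hidem : (1 - vecMulVec u (star u)) * (1 - vecMulVec u (star u)) =
      1 - vecMulVec u (star u) := by
    simp only [sub_mul, mul_sub, one_mul, mul_one, vecMulVec_mul_vecMulVec, hu, one_smul]
    abel
  have h := posSemidef_conjTranspose_mul_self (1 - vecMulVec u (star u))
  rwa [hQ, hidem] at h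

theorem posSemidef_smul_one_sub_smul_vecMulVec_iff {u : n → 𝕜} (hu : star u ⬝ᵥ u = 1)
    {a c : ℝ} (hc : 0 ≤ c) :
    ((c : 𝕜) • 1 - (a : 𝕜) • vecMulVec u (star u)).PosSemidef ↔ a ≤ c := by
  constructor
  · intro h
    have hu_val : star u ⬝ᵥ (((c : 𝕜) • 1 - (a : 𝕜) • vecMulVec u (star u)) *ᵥ u) =
        (c : 𝕜) - a := by
      simp only [sub_mulVec, smul_mulVec, one_mulVec, vecMulVec_mulVec, hu, MulOpposite.op_one,
        one_smul, dotProduct_sub, dotProduct_smul, smul_eq_mul, mul_one]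
    have hnonneg := h.dotProduct_mulVec_nonneg u
    rw [hu_val, ← RCLike.ofReal_sub, RCLike.ofReal_nonneg] at hnonneg
    linarith
  · intro hac
    have hsplit : (c : 𝕜) • 1 - (a : 𝕜) • vecMulVec u (star u) =
        (c : 𝕜) • (1 - vecMulVec u (star u)) + ((c - a : ℝ) : 𝕜) • vecMulVec u (star u) := by
      push_cast
      module
    rw [hsplit]
    exact ((posSemidef_one_sub_vecMulVec hu).smul (RCLike.ofReal_nonneg.mpr hc)).add
      ((posSemidef_vecMulVec_self_star u).smul (RCLike.ofReal_nonneg.mpr (sub_nonneg.mpr hac)))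

end RankOnePerturbation

end Matrix

noncomputable def phiPlusVec : Fin 2 × Fin 2 → ℂ := fun x =>
  if x.1 = x.2 then ((1 / Real.sqrt 2 : ℝ) : ℂ) else 0

theorem inv_ofReal_sqrt_two_mul_self :
    (Real.sqrt 2 : ℂ)⁻¹ * (Real.sqrt 2 : ℂ)⁻¹ = 2⁻¹ := by
  rw [← mul_inv, ← Complex.ofReal_mul, Real.mul_self_sqrt zero_le_two, Complex.ofReal_ofNat]

theorem star_phiPlusVec_dotProduct_phiPlusVec : star phiPlusVec ⬝ᵥ phiPlusVec = 1 := by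
  simp [phiPlusVec, dotProduct, Fintype.sum_prod_type, inv_ofReal_sqrt_two_mul_self]

theorem partialTranspose_vecMulVec_singletVec :
    partialTranspose (vecMulVec singletVec (star singletVec)) =
      (1 / 2 : ℂ) • 1 - vecMulVec phiPlusVec (star phiPlusVec) := by
  ext ⟨i, μ⟩ ⟨j, ν⟩
  fin_cases i <;> fin_cases μ <;> fin_cases j <;> fin_cases ν <;>
    simp [singletVec, phiPlusVec, vecMulVec_apply, one_apply, inv_ofReal_sqrt_two_mul_self]

theorem werner_ppt_iff_general (p : ℝ) (hp0 : 0 ≤ p) :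
    let ρW : Matrix (Fin 2 × Fin 2) (Fin 2 × Fin 2) ℂ :=
      (p : ℂ) • Matrix.vecMulVec singletVec (star singletVec) +
        (((1 - p) / 4 : ℝ) : ℂ) • 1
    (Matrix.of fun a b => ρW (b.1, a.2) (a.1, b.2) :
        Matrix (Fin 2 × Fin 2) (Fin 2 × Fin 2) ℂ).PosSemidef ↔ p ≤ 1 / 3 := by
  intro ρW
  have hρW : partialTranspose ρW =
      (((1 + p) / 4 : ℝ) : ℂ) • 1 - (p : ℂ) • vecMulVec phiPlusVec (star phiPlusVec) := by
    simp only [ρW, partialTranspose_add, partialTranspose_smul, partialTranspose_one,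
      partialTranspose_vecMulVec_singletVec]
    push_cast
    module
  change (partialTranspose ρW).PosSemidef ↔ _
  rw [hρW]
  refine (posSemidef_smul_one_sub_smul_vecMulVec_iff (a := p) (c := (1 + p) / 4)
    star_phiPlusVec_dotProduct_phiPlusVec (by positivity)).trans ?_
  constructor <;> intro <;> linarith

/-- The Werner state `p |Ψ⁻⟩⟨Ψ⁻| + (1−p)/4 · I` has a positive semidefinite partial
transpose if and only if `p ≤ 1/3`. -/
theorem werner_ppt_iff (p : ℝ) (hp0 : 0 ≤ p) (hp1 : p ≤ 1) :
    let ρW : Matrix (Fin 2 × Fin 2) (Fin 2 × Fin 2) ℂ :=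
      (p : ℂ) • Matrix.vecMulVec singletVec (star singletVec) +
        (((1 - p) / 4 : ℝ) : ℂ) • 1
    (Matrix.of fun a b => ρW (b.1, a.2) (a.1, b.2) :
        Matrix (Fin 2 × Fin 2) (Fin 2 × Fin 2) ℂ).PosSemidef ↔ p ≤ 1 / 3 :=
  werner_ppt_iff_general p hp0
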